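/- Let ρ_d > 0, b ∈ ℝ, let α : ℝ → (0, ∞) and ω : ℝ → (0, ∞) be continuous, and let (A*, Ω*) be a C¹ solution of the Approximation 4 system for t > 0. Then for all t > 0 and x ∈ [0,1] with ρ_d t > x, the representation formula Ω*(x, t) = (ω(Ω̄(t − x/ρ_d))/ρ_d)·A*(t − x/ρ_d)·exp( (b/ρ_d)·x − ∫_{t − x/ρ_d}^{t} α(A*(u)) du ) holds, where Ω̄(s) = ∫₀¹ Ω*(y, s) dy. -/

import Mathlib

open Real Set

/-- `(A, Ω)` is a C¹ solution of the Approximation 4 system for `t > 0`: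
`dA/dt = −ω(Ω̄(t)) A(t) + α(A(t)) Ω̄(t)`;
`∂Ω/∂t + ρ ∂Ω/∂x = (b − α(A(t))) Ω(x,t)` for `x ∈ [0,1]`;
`Ω(0,t) = ω(Ω̄(t)) A(t) / ρ`, where `Ω̄(t) = ∫₀¹ Ω(x,t) dx`.
Here `Ωt` and `Ωx` are the (continuous) partial derivatives of `Ω`. -/
def IsApprox4Solution (ρ b : ℝ) (α ω : ℝ → ℝ) (A : ℝ → ℝ)
    (Ω Ωt Ωx : ℝ → ℝ → ℝ) : Prop :=
  (∀ t ∈ Set.Ioi (0 : ℝ),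
    HasDerivAt A
      (-(ω (∫ x in (0 : ℝ)..1, Ω x t)) * A t +
        α (A t) * ∫ x in (0 : ℝ)..1, Ω x t) t) ∧
  (∀ t ∈ Set.Ioi (0 : ℝ), ∀ x ∈ Set.Icc (0 : ℝ) 1,
    HasDerivAt (fun s => Ω x s) (Ωt x t) t ∧
    HasDerivWithinAt (fun y => Ω y t) (Ωx x t) (Set.Icc 0 1) x ∧
    Ωt x t + ρ * Ωx x t = (b - α (A t)) * Ω x t) ∧
  (∀ t ∈ Set.Ioi (0 : ℝ),
    Ω 0 t = ω (∫ x in (0 : ℝ)..1, Ω x t) * A t / ρ) ∧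
  ContinuousOn (fun p : ℝ × ℝ => Ω p.1 p.2) (Set.Icc 0 1 ×ˢ Set.Ioi 0) ∧
  ContinuousOn (fun p : ℝ × ℝ => Ωt p.1 p.2) (Set.Icc 0 1 ×ˢ Set.Ioi 0) ∧
  ContinuousOn (fun p : ℝ × ℝ => Ωx p.1 p.2) (Set.Icc 0 1 ×ˢ Set.Ioi 0)

open Filter Topology Asymptotics

/-! Along the characteristic `s ↦ (ρ (s - s₀), s)`, which leaves the boundary `x = 0` at time
`s₀ = t - x / ρ`, the transport equation becomes the linear ODE `φ' = (b - α (A s)) φ` for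
`φ s = Ω (ρ (s - s₀)) s`: since `∂ₓΩ` is jointly continuous, the chain rule holds (up to the
boundary of `[0, 1]`) by the mean value inequality in `x`. The integrating factor solves this ODE,
and the boundary condition supplies `φ s₀ = Ω (0, s₀)`. -/

theorem isLittleO_sub_sub_mul_of_continuousWithinAt_partialDeriv {f f' : ℝ → ℝ → ℝ}
    {I T : Set ℝ} [I.OrdConnected] {x₀ t₀ : ℝ} (hx₀ : x₀ ∈ I)
    (hf : ∀ t ∈ T, ∀ x ∈ I, HasDerivWithinAt (f · t) (f' x t) I x)
    (hf' : ContinuousWithinAt (fun p : ℝ × ℝ => f' p.1 p.2) (I ×ˢ T) (x₀, t₀)) :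
    (fun p : ℝ × ℝ => f p.1 p.2 - f x₀ p.2 - (p.1 - x₀) * f' x₀ t₀)
      =o[𝓝[I ×ˢ T] (x₀, t₀)] fun p => p.1 - x₀ := by
  refine isLittleO_iff.2 fun ε hε => ?_
  obtain ⟨δ, hδ, hclose⟩ := Metric.continuousWithinAt_iff.1 hf' ε hε
  filter_upwards [self_mem_nhdsWithin, mem_nhdsWithin_of_mem_nhds (Metric.ball_mem_nhds _ hδ)]
    with p ⟨hpI, hpT⟩ hpδ
  have hseg : uIcc x₀ p.1 ⊆ I := OrdConnected.uIcc_subset ‹_› hx₀ hpI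
  have hbound : ∀ z ∈ uIcc x₀ p.1, ‖f' z p.2 - f' x₀ t₀‖ ≤ ε := by
    intro z hz
    refine (hclose (x := (z, p.2)) ⟨hseg hz, hpT⟩ ?_).le
    rw [Metric.mem_ball, Prod.dist_eq] at hpδ
    rw [Prod.dist_eq, Real.dist_eq z]
    exact lt_of_le_of_lt (max_le_max_right _ (abs_sub_left_of_mem_uIcc hz)) hpδ
  have hmvt := Convex.norm_image_sub_le_of_norm_hasDerivWithin_le
    (f := fun y => f y p.2 - y * f' x₀ t₀)
    (fun z hz => (((hf p.2 hpT z (hseg hz)).mono hseg).sub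
      ((hasDerivWithinAt_id z _).mul_const (f' x₀ t₀))).congr_deriv (by simp))
    hbound (convex_uIcc _ _) left_mem_uIcc right_mem_uIcc
  calc ‖f p.1 p.2 - f x₀ p.2 - (p.1 - x₀) * f' x₀ t₀‖
      = ‖(f p.1 p.2 - p.1 * f' x₀ t₀) - (f x₀ p.2 - x₀ * f' x₀ t₀)‖ := by ring_nf
    _ ≤ ε * ‖p.1 - x₀‖ := hmvt

theorem hasDerivWithinAt_comp_path_of_continuousWithinAt_partialDeriv {f f' : ℝ → ℝ → ℝ}
    {I T : Set ℝ} [I.OrdConnected] {γ : ℝ → ℝ} {v d t₀ : ℝ} (ht₀ : t₀ ∈ T)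
    (hγI : ∀ t ∈ T, γ t ∈ I) (hγ : HasDerivWithinAt γ v T t₀)
    (hf : ∀ t ∈ T, ∀ x ∈ I, HasDerivWithinAt (f · t) (f' x t) I x)
    (hf' : ContinuousWithinAt (fun p : ℝ × ℝ => f' p.1 p.2) (I ×ˢ T) (γ t₀, t₀))
    (hd : HasDerivWithinAt (f (γ t₀)) d T t₀) :
    HasDerivWithinAt (fun t => f (γ t) t) (d + v * f' (γ t₀) t₀) T t₀ := by
  have hpath : Tendsto (fun t => (γ t, t)) (𝓝[T] t₀) (𝓝[I ×ˢ T] (γ t₀, t₀)) :=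
    tendsto_nhdsWithin_iff.2
      ⟨hγ.continuousWithinAt.tendsto.prodMk_nhds continuousWithinAt_id.tendsto,
        eventually_nhdsWithin_of_forall fun t ht => ⟨hγI t ht, ht⟩⟩
  have hspace := ((isLittleO_sub_sub_mul_of_continuousWithinAt_partialDeriv (hγI t₀ ht₀) hf
    hf').comp_tendsto hpath).trans_isBigO hγ.hasFDerivWithinAt.isBigO_sub
  have htime := hasDerivWithinAt_iff_isLittleO.1 hd
  have hγlin := (hasDerivWithinAt_iff_isLittleO.1 hγ).const_mul_left (f' (γ t₀) t₀)
  refine hasDerivWithinAt_iff_isLittleO.2 (((hspace.add htime).add hγlin).congr_left fun t => ?_)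
  simp only [Function.comp_apply, smul_eq_mul]
  ring

theorem eq_mul_exp_integral_of_hasDerivWithinAt_mul {φ a : ℝ → ℝ} {s₀ t : ℝ} (hs₀t : s₀ ≤ t)
    (ha : ContinuousOn a (Icc s₀ t))
    (hφ : ∀ s ∈ Icc s₀ t, HasDerivWithinAt φ (a s * φ s) (Icc s₀ t) s) :
    φ t = φ s₀ * exp (∫ u in s₀..t, a u) := by
  have hP : ∀ s ∈ Icc s₀ t, HasDerivWithinAt (fun s => ∫ u in s₀..s, a u) (a s) (Icc s₀ t) s := by
    intro s hs
    have : Fact (s ∈ Icc s₀ t) := ⟨hs⟩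
    exact intervalIntegral.integral_hasDerivWithinAt_right
      (ha.mono (uIcc_subset_Icc (left_mem_Icc.2 hs₀t) hs)).intervalIntegrable
      (ha.stronglyMeasurableAtFilter_nhdsWithin measurableSet_Icc s) (ha s hs)
  set g : ℝ → ℝ := fun s => φ s * exp (-∫ u in s₀..s, a u)
  have hg : ∀ s ∈ Icc s₀ t, HasDerivWithinAt g 0 (Icc s₀ t) s := fun s hs =>
    ((hφ s hs).mul (hP s hs).neg.exp).congr_deriv (by ring)
  have hconst := constant_of_has_deriv_right_zero (fun s hs => (hg s hs).continuousWithinAt)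
    (fun s hs => (hg s (Ico_subset_Icc_self hs)).mono_of_mem_nhdsWithin (Icc_mem_nhdsGE_of_mem hs))
    t (right_mem_Icc.2 hs₀t)
  simp only [g, intervalIntegral.integral_same, neg_zero, exp_zero, mul_one] at hconst
  rw [← hconst, mul_assoc, ← exp_add, neg_add_cancel, exp_zero, mul_one]

namespace IsApprox4Solution

variable {ρ b : ℝ} {α ω A : ℝ → ℝ} {Ω Ωt Ωx : ℝ → ℝ → ℝ}

theorem hasDerivWithinAt_characteristic (hsol : IsApprox4Solution ρ b α ω A Ω Ωt Ωx)
    (hρ : 0 ≤ ρ) {s₀ t : ℝ} (hs₀ : 0 < s₀) (hρt : ρ * (t - s₀) ≤ 1) :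
    ∀ s ∈ Icc s₀ t, HasDerivWithinAt (fun s => Ω (ρ * (s - s₀)) s)
      ((b - α (A s)) * Ω (ρ * (s - s₀)) s) (Icc s₀ t) s := by
  obtain ⟨-, hpde, -, -, -, hΩx⟩ := hsol
  have hpos : Icc s₀ t ⊆ Ioi 0 := fun s hs => hs₀.trans_le hs.1
  have hγI : ∀ s ∈ Icc s₀ t, ρ * (s - s₀) ∈ Icc (0 : ℝ) 1 := fun s hs =>
    ⟨mul_nonneg hρ (sub_nonneg.2 hs.1),
      le_trans (mul_le_mul_of_nonneg_left (sub_le_sub_right hs.2 _) hρ) hρt⟩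
  intro s hs
  obtain ⟨hΩt, -, hpde_s⟩ := hpde s (hpos hs) _ (hγI s hs)
  rw [← hpde_s]
  exact hasDerivWithinAt_comp_path_of_continuousWithinAt_partialDeriv hs hγI
    ((((hasDerivAt_id s).sub_const s₀).const_mul ρ).congr_deriv (mul_one ρ)).hasDerivWithinAt
    (fun r hr x hx => (hpde r (hpos hr) x hx).2.1)
    ((hΩx _ ⟨hγI s hs, hpos hs⟩).mono (prod_mono subset_rfl hpos)) hΩt.hasDerivWithinAt

theorem eq_mul_exp_along_characteristic (hsol : IsApprox4Solution ρ b α ω A Ω Ωt Ωx)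
    (hρ : 0 ≤ ρ) (hα : Continuous α) {s₀ t : ℝ} (hs₀ : 0 < s₀) (hs₀t : s₀ ≤ t)
    (hρt : ρ * (t - s₀) ≤ 1) :
    Ω (ρ * (t - s₀)) t = Ω 0 s₀ * exp (b * (t - s₀) - ∫ u in s₀..t, α (A u)) := by
  have hαA : ContinuousOn (fun u => α (A u)) (Icc s₀ t) := fun u hu =>
    (hα.continuousAt.comp (hsol.1 u (hs₀.trans_le hu.1)).continuousAt).continuousWithinAt
  have hchar := eq_mul_exp_integral_of_hasDerivWithinAt_mul (a := fun u => b - α (A u)) hs₀t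
    (continuousOn_const.sub hαA)
    (hsol.hasDerivWithinAt_characteristic hρ hs₀ hρt)
  rwa [intervalIntegral.integral_sub intervalIntegrable_const
    (hαA.mono (uIcc_subset_Icc (left_mem_Icc.2 hs₀t) (right_mem_Icc.2 hs₀t))).intervalIntegrable,
    intervalIntegral.integral_const, smul_eq_mul, mul_comm (t - s₀), sub_self, mul_zero] at hchar

end IsApprox4Solution

theorem stmt10_general (ρ b : ℝ) (hρ : 0 < ρ) (α ω : ℝ → ℝ)
    (hαc : Continuous α)
    (A : ℝ → ℝ) (Ω Ωt Ωx : ℝ → ℝ → ℝ)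
    (hsol : IsApprox4Solution ρ b α ω A Ω Ωt Ωx) :
    ∀ t ∈ Set.Ioi (0 : ℝ), ∀ x ∈ Set.Icc (0 : ℝ) 1, ρ * t > x →
      Ω x t =
        (ω (∫ y in (0 : ℝ)..1, Ω y (t - x / ρ)) / ρ) * A (t - x / ρ) *
          Real.exp ((b / ρ) * x - ∫ u in (t - x / ρ)..t, α (A u)) := by
  intro t _ x hx hρt
  have hx_eq : ρ * (t - (t - x / ρ)) = x := by field_simp; ring
  have hs₀ : 0 < t - x / ρ := sub_pos.2 ((div_lt_iff₀ hρ).2 (by linarith))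
  have hs₀t : t - x / ρ ≤ t := sub_le_self _ (div_nonneg hx.1 hρ.le)
  have hchar := hsol.eq_mul_exp_along_characteristic hρ.le hαc hs₀ hs₀t (hx_eq.trans_le hx.2)
  rw [hx_eq, hsol.2.2.1 _ hs₀] at hchar
  rw [hchar, show b * (t - (t - x / ρ)) = b / ρ * x by field_simp; ring]
  ring

/-- Let `ρ > 0`, `b ∈ ℝ`, `α, ω : ℝ → (0,∞)` continuous, and let
`(A, Ω)` be a C¹ solution of the Approximation 4 system for `t > 0`.  Then for all
`t > 0` and `x ∈ [0,1]` with `ρ t > x`, the characteristics representation formula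
`Ω(x,t) = (ω(Ω̄(t − x/ρ))/ρ) A(t − x/ρ) exp((b/ρ) x − ∫_{t−x/ρ}^t α(A(u)) du)`
holds. -/
theorem stmt10 (ρ b : ℝ) (hρ : 0 < ρ) (α ω : ℝ → ℝ)
    (hαc : Continuous α) (hωc : Continuous ω)
    (hαpos : ∀ A : ℝ, 0 < α A) (hωpos : ∀ Ω : ℝ, 0 < ω Ω)
    (A : ℝ → ℝ) (Ω Ωt Ωx : ℝ → ℝ → ℝ)
    (hsol : IsApprox4Solution ρ b α ω A Ω Ωt Ωx) :
    ∀ t ∈ Set.Ioi (0 : ℝ), ∀ x ∈ Set.Icc (0 : ℝ) 1, ρ * t > x →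
      Ω x t =
        (ω (∫ y in (0 : ℝ)..1, Ω y (t - x / ρ)) / ρ) * A (t - x / ρ) *
          Real.exp ((b / ρ) * x - ∫ u in (t - x / ρ)..t, α (A u)) :=
  stmt10_general ρ b hρ α ω hαc A Ω Ωt Ωx hsol
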